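/- Let M be a non-orientable regular map of type {p,q} with p or q odd, and let ϑ: E(M) → ℤ_4 assign weight 0 to 1-edges and weight 1 to all other edges. Then M contains a closed walk of odd length whose ϑ-weight is even. -/
import Mathlib


/-- A maniplex of rank `n` in permutation form: a flag set `F` together with
fixed-point-free involutions `r i` (the `i`-adjacency maps, giving a proper
`n`-edge-colouring of an `n`-valent graph), satisfying the string property
(for non-consecutive colours `i, j` the maps commute and the `{i,j}`-subgraph
has no multiple edges, so that it is a disjoint union of 4-cycles), and
connectivity. -/
structure Maniplex (n : ℕ) (F : Type*) where
  r : Fin n → F → F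
  invol : ∀ i u, r i (r i u) = u
  free : ∀ i u, r i u ≠ u
  stringComm : ∀ i j : Fin n, (i : ℕ) + 1 < (j : ℕ) → ∀ u, r i (r j u) = r j (r i u)
  stringNe : ∀ i j : Fin n, (i : ℕ) + 1 < (j : ℕ) → ∀ u, r i u ≠ r j u
  conn : ∀ u v : F, ∃ l : List (Fin n), l.foldl (fun w i => r i w) u = v

/-- The flag reached from `u` by following the walk whose successive edge
colours are listed in `l`. -/
def walkEnd {n : ℕ} {F : Type*} (M : Maniplex n F) (l : List (Fin n)) (u : F) : F :=
  l.foldl (fun w i => M.r i w) u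

/-- The alternating weight `Σ (-1)^t ω(e_t)` of the walk starting at `u` whose
successive edge colours are listed in `l`. -/
def walkWeight {n k : ℕ} {F : Type*} (M : Maniplex n F) (ω : Fin n → F → ZMod k) :
    List (Fin n) → F → ZMod k
  | [], _ => 0
  | i :: t, u => ω i u - walkWeight M ω t (M.r i u)

/-- The `i`-adjacency map of the cross-cover `M^ω`: flags `F × ℤ_k`, with
`(u, a)` being `i`-adjacent to `(r i u, ω_i(u) - a)`. -/
def coverMap {n k : ℕ} {F : Type*} (M : Maniplex n F) (ω : Fin n → F → ZMod k)
    (i : Fin n) : F × ZMod k → F × ZMod k :=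
  fun p => (M.r i p.1, ω i p.1 - p.2)

/-- A map (3-maniplex) is regular if its colour-preserving automorphism group
is transitive on flags. -/
def ManiplexRegular {n : ℕ} {F : Type*} (M : Maniplex n F) : Prop :=
  ∀ u v : F, ∃ φ : Equiv.Perm F,
    (∀ (i : Fin n) (x : F), φ (M.r i x) = M.r i (φ x)) ∧ φ u = v

/-- A map (3-maniplex) is non-orientable iff its flag graph is non-bipartite,
i.e. it contains a closed walk of odd length. -/
def NonOrientable {n : ℕ} {F : Type*} (M : Maniplex n F) : Prop :=
  ∃ (u : F) (l : List (Fin n)), Odd l.length ∧ walkEnd M l u = u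

/-- A map is of type `{p,q}` if every component of the subgraph induced by the
colours `0,1` is a cycle of length `2p`, and every component of the subgraph
induced by the colours `1,2` is a cycle of length `2q`:  the rotations
`r₁ ∘ r₀` and `r₂ ∘ r₁` have all orbits of size exactly `p`, resp. `q`, and
there are no multiple edges. -/
def MapOfType {F : Type*} (M : Maniplex 3 F) (p q : ℕ) : Prop :=
  (∀ u : F,
      (fun w => M.r 1 (M.r 0 w))^[p] u = u ∧
      (∀ t, 0 < t → t < p → (fun w => M.r 1 (M.r 0 w))^[t] u ≠ u) ∧
      M.r 0 u ≠ M.r 1 u) ∧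
  (∀ u : F,
      (fun w => M.r 2 (M.r 1 w))^[q] u = u ∧
      (∀ t, 0 < t → t < q → (fun w => M.r 2 (M.r 1 w))^[t] u ≠ u) ∧
      M.r 1 u ≠ M.r 2 u)

/-- The weight function `ϑ : E(M) → ℤ_4` giving weight `0` to `1`-edges and
weight `1` to all other edges. -/
def vartheta {F : Type*} : Fin 3 → F → ZMod 4 :=
  fun i _ => if i = 1 then 0 else 1

section Aux

variable {n k : ℕ} {F : Type*}

lemma walkEnd_nil (M : Maniplex n F) (u : F) : walkEnd M [] u = u := rfl

lemma walkEnd_cons (M : Maniplex n F) (i : Fin n) (l : List (Fin n)) (u : F) :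
    walkEnd M (i :: l) u = walkEnd M l (M.r i u) := rfl

lemma walkEnd_append (M : Maniplex n F) (l₁ l₂ : List (Fin n)) (u : F) :
    walkEnd M (l₁ ++ l₂) u = walkEnd M l₂ (walkEnd M l₁ u) := by
  simp [walkEnd, List.foldl_append]

lemma walkWeight_append (M : Maniplex n F) (ω : Fin n → F → ZMod k)
    (l₁ l₂ : List (Fin n)) (u : F) :
    walkWeight M ω (l₁ ++ l₂) u =
      walkWeight M ω l₁ u + (-1 : ZMod k) ^ l₁.length * walkWeight M ω l₂ (walkEnd M l₁ u) := by
  induction l₁ generalizing u with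
  | nil => simp [walkWeight, walkEnd]
  | cons i t ih =>
      have h1 : walkWeight M ω ((i :: t) ++ l₂) u = ω i u - walkWeight M ω (t ++ l₂) (M.r i u) :=
        rfl
      have h2 : walkWeight M ω (i :: t) u = ω i u - walkWeight M ω t (M.r i u) := rfl
      rw [h1, h2, ih, walkEnd_cons, List.length_cons, pow_succ]
      ring

/-- The colour list of a walk going `n` times around a `{0,1}`-face. -/
def facePList : ℕ → List (Fin 3)
  | 0 => []
  | n + 1 => 0 :: 1 :: facePList n

/-- The colour list of a walk going `n` times around a `{1,2}`-vertex. -/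
def faceQList : ℕ → List (Fin 3)
  | 0 => []
  | n + 1 => 1 :: 2 :: faceQList n

lemma facePList_length (n : ℕ) : (facePList n).length = 2 * n := by
  induction n with
  | zero => rfl
  | succ m ih => simp [facePList, ih]; ring

lemma faceQList_length (n : ℕ) : (faceQList n).length = 2 * n := by
  induction n with
  | zero => rfl
  | succ m ih => simp [faceQList, ih]; ring

lemma walkEnd_facePList (M : Maniplex 3 F) (n : ℕ) (u : F) :
    walkEnd M (facePList n) u = (fun w => M.r 1 (M.r 0 w))^[n] u := by
  induction n generalizing u with
  | zero => rfl
  | succ m ih =>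
      rw [facePList, walkEnd_cons, walkEnd_cons, ih, Function.iterate_succ_apply]

lemma walkEnd_faceQList (M : Maniplex 3 F) (n : ℕ) (u : F) :
    walkEnd M (faceQList n) u = (fun w => M.r 2 (M.r 1 w))^[n] u := by
  induction n generalizing u with
  | zero => rfl
  | succ m ih =>
      rw [faceQList, walkEnd_cons, walkEnd_cons, ih, Function.iterate_succ_apply]

lemma walkWeight_facePList (M : Maniplex 3 F) (n : ℕ) (u : F) :
    walkWeight M vartheta (facePList n) u = (n : ZMod 4) := by
  induction n generalizing u with
  | zero => rfl
  | succ m ih =>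
      simp only [facePList, walkWeight, ih, vartheta]
      norm_num
      push_cast
      ring

lemma walkWeight_faceQList (M : Maniplex 3 F) (n : ℕ) (u : F) :
    walkWeight M vartheta (faceQList n) u = -(n : ZMod 4) := by
  induction n generalizing u with
  | zero => simp [faceQList, walkWeight]
  | succ m ih =>
      simp only [faceQList, walkWeight, ih, vartheta]
      norm_num
      push_cast
      ring

lemma zmod4_even_or (a : ZMod 4) :
    ((∃ t : ZMod 4, a = t + t) ∨ (∃ t : ZMod 4, a - 1 = t + t)) := by
  revert a
  decide

end Aux

/-- Every non-orientable regular map of type `{p,q}` with `p` or `q` odd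
contains a closed walk of odd length whose `ϑ`-weight is even. -/
theorem exists_oddWalk_even_weight {F : Type*} (M : Maniplex 3 F) (p q : ℕ)
    (htype : MapOfType M p q) (hreg : ManiplexRegular M) (hnonor : NonOrientable M)
    (hodd : Odd p ∨ Odd q) :
    ∃ (u : F) (l : List (Fin 3)), Odd l.length ∧ walkEnd M l u = u ∧
      ∃ t : ZMod 4, walkWeight M vartheta l u = t + t := by
  obtain ⟨u, l, hlen, hclose⟩ := hnonor
  rcases zmod4_even_or (walkWeight M vartheta l u) with ⟨t, ht⟩ | ⟨t, ht⟩
  · exact ⟨u, l, hlen, hclose, t, ht⟩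
  · -- the weight of `l` is odd; append a face walk of odd weight
    have hw : walkWeight M vartheta l u = t + t + 1 := by linear_combination ht
    have hneg : (-1 : ZMod 4) ^ l.length = -1 := Odd.neg_one_pow hlen
    rcases hodd with hp | hq
    · obtain ⟨m, hm⟩ := hp
      refine ⟨u, l ++ facePList p, ?_, ?_, t - (m : ZMod 4), ?_⟩
      · rw [List.length_append, facePList_length]
        exact (hlen.add_even ⟨p, by ring⟩)
      · rw [walkEnd_append, hclose, walkEnd_facePList]
        exact (htype.1 u).1
      · rw [walkWeight_append, hclose, walkWeight_facePList, hw, hneg, hm]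
        push_cast
        ring
    · obtain ⟨m, hm⟩ := hq
      refine ⟨u, l ++ faceQList q, ?_, ?_, t + (m : ZMod 4) + 1, ?_⟩
      · rw [List.length_append, faceQList_length]
        exact (hlen.add_even ⟨q, by ring⟩)
      · rw [walkEnd_append, hclose, walkEnd_faceQList]
        exact (htype.2 u).1
      · rw [walkWeight_append, hclose, walkWeight_faceQList, hw, hneg, hm]
        push_cast
        ring
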